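/- arXiv:2310.15650 — 4 statements merged into one kernel-verified Lean document; each statement's English description precedes it below -/
import Mathlib

section
/- Let (G,H) be dense and let u be a vertex of G. Define D⁺_{G,H}(u) to be the set of values d⁺_O(u) over all orientations O of G such that d⁺_O(x) ∈ H(x) for every vertex x ≠ u. Then D⁺_{G,H}(u) is nonempty. -/
/-!
Settle the vertices other than `u` in order of decreasing distance from `u`. To settle `y`,
pick a neighbour `q` closer to `u` and orient the edge `yq` so that `d⁺(y) ∈ H(y)`: if the
orientation `q → y` fails, density says `y → q` works. Only `y` and `q` change out-degree,
and `q` is either `u` or settled later.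
-/

/-- An orientation of a graph: each edge is assigned a source endpoint. -/
structure GOrientation {V : Type*} (G : SimpleGraph V) where
  src : Sym2 V → V
  mem : ∀ e ∈ G.edgeSet, src e ∈ e

/-- Out-degree of `v` under orientation `O`: number of edges whose source is `v`. -/
noncomputable def outDeg {V : Type*} {G : SimpleGraph V} (O : GOrientation G) (v : V) : ℕ :=
  Set.ncard {e ∈ G.edgeSet | O.src e = v}

/-- Degree of a vertex. -/
noncomputable def deg {V : Type*} (G : SimpleGraph V) (v : V) : ℕ :=
  (G.neighborSet v).ncard

/-- The pair `(G, H)` is dense: `G` is connected and `i ∉ H v → i+1 ∈ H v`. -/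
def DensePair {V : Type*} (G : SimpleGraph V) (H : V → Set ℕ) : Prop :=
  G.Connected ∧ ∀ v : V, ∀ i : ℕ, i ∉ H v → i + 1 ∈ H v

/-- `D⁺_{G,H}(u)`: possible out-degrees of `u` over orientations feasible away from `u`. -/
noncomputable def Dset {V : Type*} (G : SimpleGraph V) (H : V → Set ℕ) (u : V) : Set ℕ :=
  {d | ∃ O : GOrientation G, (∀ x, x ≠ u → outDeg O x ∈ H x) ∧ outDeg O u = d}

/-- `x` is a cut vertex: `G` is connected but `G - x` is not. -/
def IsCutVertex {V : Type*} (G : SimpleGraph V) (x : V) : Prop :=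
  G.Connected ∧ ¬ (G.induce ({x}ᶜ : Set V)).Connected

lemma SimpleGraph.Connected.exists_adj_dist_lt {V : Type*} {G : SimpleGraph V}
    (hG : G.Connected) {x u : V} (hx : x ≠ u) :
    ∃ q, G.Adj x q ∧ G.dist q u < G.dist x u := by
  obtain ⟨w, hw⟩ := hG.exists_walk_length_eq_dist x u
  cases w with
  | nil => exact absurd rfl hx
  | cons h w' =>
    refine ⟨_, h, ?_⟩
    have := SimpleGraph.dist_le w'
    rw [SimpleGraph.Walk.length_cons] at hw
    omega

namespace GOrientation

variable {V : Type*} {G : SimpleGraph V}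

noncomputable instance : Inhabited (GOrientation G) :=
  ⟨⟨fun e => e.out.1, fun e _ => e.out_fst_mem⟩⟩

open Classical in
noncomputable def setSrc (O : GOrientation G) (x y : V) : GOrientation G where
  src e := if e = s(x, y) then x else O.src e
  mem e he := by
    split_ifs with h
    · simp [h]
    · exact O.mem e he

lemma outDeg_setSrc_of_ne (O : GOrientation G) {x y z : V} (hzx : z ≠ x) (hzy : z ≠ y) :
    outDeg (O.setSrc x y) z = outDeg O z := by
  unfold outDeg setSrc
  congr 1
  ext e
  simp only [Set.mem_ofPred_eq]
  split_ifs with h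
  · subst h
    refine ⟨fun ⟨_, hxz⟩ => absurd hxz.symm hzx, fun ⟨he, hsrc⟩ => ?_⟩
    have := O.mem _ he
    rw [hsrc, Sym2.mem_iff] at this
    tauto
  · rfl

lemma outDeg_setSrc_self [Finite V] (O : GOrientation G) {x y : V} (hxy : G.Adj x y) :
    outDeg (O.setSrc x y) x = outDeg (O.setSrc y x) x + 1 := by
  have hset : {e ∈ G.edgeSet | (O.setSrc x y).src e = x} =
      insert s(x, y) {e ∈ G.edgeSet | (O.setSrc y x).src e = x} := by
    ext e
    by_cases h : e = s(x, y)
    · subst h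
      simp [setSrc, hxy]
    · have h' : e ≠ s(y, x) := by rwa [Sym2.eq_swap]
      simp [setSrc, h, h']
  have hnotMem : s(x, y) ∉ {e ∈ G.edgeSet | (O.setSrc y x).src e = x} := by
    simp [setSrc, Sym2.eq_swap, hxy.ne']
  rw [outDeg, outDeg, hset, Set.ncard_insert_of_notMem hnotMem (Set.toFinite _)]

lemma exists_outDeg_mem [Finite V] (O : GOrientation G) {x y : V} (hxy : G.Adj x y)
    {A : Set ℕ} (hA : ∀ i, i ∉ A → i + 1 ∈ A) :
    ∃ O' : GOrientation G, outDeg O' x ∈ A ∧ ∀ z, z ≠ x → z ≠ y → outDeg O' z = outDeg O z := by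
  by_cases hmem : outDeg (O.setSrc y x) x ∈ A
  · exact ⟨O.setSrc y x, hmem, fun z hzx hzy => outDeg_setSrc_of_ne O hzy hzx⟩
  · refine ⟨O.setSrc x y, ?_, fun z hzx hzy => outDeg_setSrc_of_ne O hzx hzy⟩
    rw [outDeg_setSrc_self O hxy]
    exact hA _ hmem

end GOrientation

theorem exists_orientation_forall_mem_outDeg_mem {V : Type*} [Finite V] {G : SimpleGraph V}
    (hG : G.Connected) {H : V → Set ℕ} (hH : ∀ v i, i ∉ H v → i + 1 ∈ H v) (u : V)
    (S : Finset V) : ∃ O : GOrientation G, ∀ x ∈ S, x ≠ u → outDeg O x ∈ H x := by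
  classical
  induction S using Finset.strongInduction with
  | H S ih =>
  rcases (S.filter (· ≠ u)).eq_empty_or_nonempty with hS | hS
  · refine ⟨default, fun x hx hxu => ?_⟩
    exact absurd (Finset.mem_filter.2 ⟨hx, hxu⟩) (hS ▸ Finset.notMem_empty x)
  obtain ⟨y, hy, hmin⟩ := Finset.exists_min_image _ (G.dist · u) hS
  rw [Finset.mem_filter] at hy
  obtain ⟨O, hO⟩ := ih (S.erase y) (Finset.erase_ssubset hy.1)
  obtain ⟨q, hyq, hq⟩ := hG.exists_adj_dist_lt hy.2
  obtain ⟨O', hO'y, hO'⟩ := O.exists_outDeg_mem hyq (hH y)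
  refine ⟨O', fun x hx hxu => ?_⟩
  by_cases hxy : x = y
  · exact hxy ▸ hO'y
  have hxq : x ≠ q := by
    rintro rfl
    exact (hmin x (Finset.mem_filter.2 ⟨hx, hxu⟩)).not_gt hq
  rw [hO' x hxy hxq]
  exact hO x (Finset.mem_erase.2 ⟨hxy, hx⟩) hxu

theorem stmt2 {V : Type*} [Fintype V] (G : SimpleGraph V) (H : V → Set ℕ)
    (hd : DensePair G H) (u : V) :
    (Dset G H u).Nonempty := by
  obtain ⟨O, hO⟩ := exists_orientation_forall_mem_outDeg_mem hd.1 hd.2 u Finset.univ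
  exact ⟨outDeg O u, O, fun x hx => hO x (Finset.mem_univ x) hx, rfl⟩
end

section
/- Let G be a graph and H : V(G) → 2^ℕ such that for every vertex v, H(v) is either the set of all even integers in [0, 2⌈d_G(v)/2⌉] or the set of all odd integers in [1, 2⌈d_G(v)/2⌉ − 1]. If |{v ∈ V(G) : H(v) consists of odd integers}| ≡ e(G) (mod 2), then G admits an H-orientation. -/
/-!
Reversing an edge `uv` flips the parity of the out-degrees of `u` and `v` and of nothing else;
reversing the edges of a walk therefore flips exactly the parities at its two ends. In a connected
graph this reaches every parity vector `q` with `∑ q ≡ e(G)`, the sum of all out-degrees being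
`e(G)`. Each `H v` contains every number of its parity in `[0, d_G(v)]`, and every out-degree
lies in that range, so an orientation with the right out-degree parities is an `H`-orientation.
-/

open Finset

lemma Pi.single_add_self_of_charTwo {ι R : Type*} [DecidableEq ι] [Semiring R] [CharP R 2] (i : ι)
    (a : R) : (Pi.single i a + Pi.single i a : ι → R) = 0 := by
  rw [← Pi.single_add, CharTwo.add_self_eq_zero, Pi.single_zero]

namespace GOrientation

variable {V : Type*} {G : SimpleGraph V}

noncomputable instance inst_s12 : Inhabited (GOrientation G) :=
  ⟨⟨fun e => e.out.1, fun e _ => e.out_fst_mem⟩⟩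

def reverseEdge [DecidableEq V] (O : GOrientation G) (u w : V) : GOrientation G where
  src e := if e = s(u, w) then (if O.src e = u then w else u) else O.src e
  mem e he := by
    split_ifs with huw
    · simp [huw]
    · simp [huw]
    · exact O.mem e he

noncomputable def parity (O : GOrientation G) (v : V) : ZMod 2 := outDeg O v

variable [Fintype V]

lemma outDeg_le_deg (O : GOrientation G) (v : V) : outDeg O v ≤ deg G v := by
  classical
  calc outDeg O v ≤ (G.incidenceSet v).ncard :=
        Set.ncard_le_ncard (fun e ⟨he, hsrc⟩ => ⟨he, hsrc ▸ O.mem e he⟩) (Set.toFinite _)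
    _ = deg G v := Set.ncard_congr' (G.incidenceSetEquivNeighborSet v)

lemma outDeg_eq_card_filter [DecidableEq V] [DecidableRel G.Adj] (O : GOrientation G) (v : V) :
    outDeg O v = #{e ∈ G.edgeFinset | O.src e = v} := by
  rw [outDeg, ← Set.ncard_coe_finset, coe_filter]
  simp only [SimpleGraph.mem_edgeFinset]

lemma sum_outDeg (O : GOrientation G) : ∑ v, outDeg O v = G.edgeSet.ncard := by
  classical
  rw [← SimpleGraph.coe_edgeFinset, Set.ncard_coe_finset,
    card_eq_sum_card_fiberwise (f := O.src) (t := univ) (fun _ _ => mem_univ _)]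
  simp only [outDeg_eq_card_filter]

lemma sum_parity (O : GOrientation G) : ∑ v, O.parity v = G.edgeSet.ncard := by
  classical
  simp only [parity, ← Nat.cast_sum, sum_outDeg]

section

variable [DecidableEq V]

lemma parity_eq_sum [DecidableRel G.Adj] (O : GOrientation G) (v : V) :
    O.parity v = ∑ e ∈ G.edgeFinset, if O.src e = v then 1 else 0 := by
  rw [parity, outDeg_eq_card_filter, natCast_card_filter]

lemma parity_reverseEdge (O : GOrientation G) {u w : V} (h : G.Adj u w) :
    (O.reverseEdge u w).parity = O.parity + Pi.single u 1 + Pi.single w 1 := by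
  classical
  funext x
  have hterm : ∀ e, (if (O.reverseEdge u w).src e = x then (1 : ZMod 2) else 0) =
      (if O.src e = x then 1 else 0) +
        if e = s(u, w) then (Pi.single u 1 + Pi.single w 1 : V → ZMod 2) x else 0 := by
    intro e
    rcases eq_or_ne e s(u, w) with rfl | he
    · have hsrc := O.mem _ (G.mem_edgeSet.2 h)
      have : ¬ (u = x ∧ w = x) := fun ⟨hu, hw⟩ => h.ne (hu.trans hw.symm)
      rcases Sym2.mem_iff.1 hsrc with hs | hs <;> by_cases hu : u = x <;> by_cases hw : w = x <;>
        simp_all [reverseEdge, eq_comm (a := x), h.ne.symm] <;> decide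
    · simp [reverseEdge, he]
  simp only [Pi.add_apply, parity_eq_sum, hterm, sum_add_distrib, sum_ite_eq',
    SimpleGraph.mem_edgeFinset, SimpleGraph.mem_edgeSet, h, if_true, add_assoc]

lemma exists_parity_eq_add_of_walk {u w : V} (p : G.Walk u w) (O : GOrientation G) :
    ∃ O' : GOrientation G, O'.parity = O.parity + Pi.single u 1 + Pi.single w 1 := by
  induction p generalizing O with
  | nil => exact ⟨O, by rw [add_assoc, Pi.single_add_self_of_charTwo, add_zero]⟩
  | @cons u y w h p ih =>
    obtain ⟨O', hO'⟩ := ih (O.reverseEdge u y)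
    refine ⟨O', ?_⟩
    rw [hO', parity_reverseEdge O h]
    linear_combination Pi.single_add_self_of_charTwo y (1 : ZMod 2)

lemma exists_parity_eq_add_smul_of_reachable {u w : V} (huw : G.Reachable u w) (t : ZMod 2)
    (O : GOrientation G) :
    ∃ O' : GOrientation G, O'.parity = O.parity + t • (Pi.single u 1 + Pi.single w 1) := by
  obtain rfl | rfl : t = 0 ∨ t = 1 := by revert t; decide
  · exact ⟨O, by rw [zero_smul, add_zero]⟩
  · obtain ⟨O', hO'⟩ := exists_parity_eq_add_of_walk huw.some O
    exact ⟨O', by rw [hO', one_smul, add_assoc]⟩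

lemma exists_parity_eq_add_sum (hG : G.Preconnected) (r : V) (c : V → ZMod 2)
    (s : Finset V) (O : GOrientation G) :
    ∃ O' : GOrientation G,
      O'.parity = O.parity + ∑ v ∈ s, c v • (Pi.single r 1 + Pi.single v 1) := by
  induction s using Finset.induction_on generalizing O with
  | empty => exact ⟨O, by simp⟩
  | insert a s ha ih =>
    obtain ⟨O₁, hO₁⟩ := exists_parity_eq_add_smul_of_reachable (hG r a) (c a) O
    obtain ⟨O', hO'⟩ := ih O₁
    exact ⟨O', by rw [hO', hO₁, sum_insert ha, add_assoc]⟩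

end

theorem exists_parity_eq (hG : G.Preconnected) (q : V → ZMod 2)
    (hq : ∑ v, q v = G.edgeSet.ncard) : ∃ O : GOrientation G, O.parity = q := by
  classical
  cases isEmpty_or_nonempty V
  · exact ⟨default, funext isEmptyElim⟩
  obtain ⟨r⟩ := ‹Nonempty V›
  let O₀ : GOrientation G := default
  set c := q - O₀.parity
  have hc : ∑ v, c v = 0 := by
    simp only [c, Pi.sub_apply, sum_sub_distrib, hq, sum_parity, sub_self]
  obtain ⟨O, hO⟩ := exists_parity_eq_add_sum hG r c univ O₀
  refine ⟨O, ?_⟩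
  calc O.parity = O₀.parity + ((∑ v, c v) • Pi.single r 1 + ∑ v, Pi.single v (c v)) := by
        simp only [hO, smul_add, sum_add_distrib, sum_smul, ← Pi.single_smul, smul_eq_mul, mul_one]
    _ = q := by rw [hc, zero_smul, zero_add, univ_sum_single, add_sub_cancel]

end GOrientation

open GOrientation in
theorem stmt12 {V : Type*} [Fintype V] (G : SimpleGraph V) (H : V → Set ℕ)
    (hG : G.Connected)
    (hH : ∀ v : V, H v = {i | i ≤ 2 * ((deg G v + 1) / 2) ∧ Even i} ∨
                   H v = {i | 1 ≤ i ∧ i ≤ 2 * ((deg G v + 1) / 2) - 1 ∧ Odd i})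
    (hpar : {v : V | ∀ n ∈ H v, Odd n}.ncard % 2 = G.edgeSet.ncard % 2) :
    ∃ O : GOrientation G, ∀ v, outDeg O v ∈ H v := by
  classical
  let q : V → ZMod 2 := fun v => if ∀ n ∈ H v, Odd n then 1 else 0
  have hq : ∑ v, q v = G.edgeSet.ncard := by
    rw [sum_boole, ZMod.natCast_eq_natCast_iff' _ _ 2, ← hpar, ← Set.ncard_coe_finset,
      coe_filter_univ]
  obtain ⟨O, hO⟩ := exists_parity_eq hG.preconnected q hq
  refine ⟨O, fun v => ?_⟩
  have hle := O.outDeg_le_deg v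
  have hOv : (outDeg O v : ZMod 2) = q v := congrFun hO v
  rcases hH v with hv | hv <;> rw [hv]
  · have hq0 : ¬ ∀ n ∈ H v, Odd n := fun h => Nat.not_odd_zero (h 0 (by simp [hv]))
    rw [show q v = 0 from if_neg hq0, ZMod.natCast_eq_zero_iff_even, Nat.even_iff] at hOv
    exact ⟨by omega, Nat.even_iff.2 hOv⟩
  · have hq1 : ∀ n ∈ H v, Odd n := fun n hn => by rw [hv] at hn; exact hn.2.2
    rw [show q v = 1 from if_pos hq1, ZMod.natCast_eq_one_iff_odd, Nat.odd_iff] at hOv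
    exact ⟨by omega, by omega, Nat.odd_iff.2 hOv⟩
end

section
/- Let (G,H) be dense, let x be a cut vertex of G, and let 𝓑 be the family of subgraphs G[V(C) ∪ {x}] over connected components C of G − x. Then D⁺_{G,H}(x) = Σ_{B ∈ 𝓑} D⁺_{B,H}(x), where the sum of sets is {a₁ + ⋯ + a_m : a_j ∈ D⁺_{B_j,H}(x)}. -/
open SimpleGraph


section Aux
variable {V : Type*}

private lemma aux14_sym2_inj {S : Set V} :
    Function.Injective (Sym2.map (Subtype.val : S → V)) :=
  Sym2.map.injective Subtype.val_injective

private lemma aux14_induce_edge_iff (G : SimpleGraph V) (S : Set V) (e : Sym2 S) :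
    e ∈ (G.induce S).edgeSet ↔ Sym2.map Subtype.val e ∈ G.edgeSet := by
  induction e using Sym2.ind with
  | _ a b => simp

private lemma aux14_exists_lift (S : Set V) (e : Sym2 V) (h : ∀ a ∈ e, a ∈ S) :
    ∃ e' : Sym2 S, Sym2.map Subtype.val e' = e := by
  induction e using Sym2.ind with
  | _ a b => exact ⟨s(⟨a, h a (by simp)⟩, ⟨b, h b (by simp)⟩), by simp⟩

private lemma aux14_adj_of_mems {G : SimpleGraph V} {e : Sym2 V} (he : e ∈ G.edgeSet)
    {a b : V} (ha : a ∈ e) (hb : b ∈ e) (hab : a ≠ b) : G.Adj a b := by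
  have : e = s(a, b) := (Sym2.mem_and_mem_iff hab).1 ⟨ha, hb⟩
  rwa [this, SimpleGraph.mem_edgeSet] at he

private lemma aux14_exists_ne_mem {e : Sym2 V} (hd : ¬ e.IsDiag) (x : V) :
    ∃ z ∈ e, z ≠ x := by
  induction e using Sym2.ind with
  | _ u v =>
    rw [Sym2.isDiag_iff_proj_eq] at hd
    by_cases hu : u = x
    · exact ⟨v, by simp, fun h => hd (by rw [hu, h])⟩
    · exact ⟨u, by simp, hu⟩

open scoped Classical in
private lemma aux14_ncard_fiberwise {α β : Type*} [Fintype α] [Fintype β]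
    (s : Set α) (g : α → β) :
    s.ncard = ∑ b, {a ∈ s | g a = b}.ncard := by
  classical
  rw [Set.ncard_eq_toFinset_card' s,
    Finset.card_eq_sum_card_fiberwise (f := g) (t := Finset.univ) (fun a _ => Finset.mem_univ _)]
  refine Finset.sum_congr rfl fun b _ => ?_
  rw [Set.ncard_eq_toFinset_card']
  congr 1
  ext a
  simp

end Aux

section Comp
variable {V : Type*} {G : SimpleGraph V} {x : V}

private lemma aux14_comp_eq_of_mem {C : (G.induce ({x}ᶜ : Set V)).ConnectedComponent}
    {z : V} (hzx : z ∈ ({x}ᶜ : Set V))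
    (hz : z ∈ (Subtype.val '' C.supp ∪ {x} : Set V)) :
    (G.induce ({x}ᶜ : Set V)).connectedComponentMk ⟨z, hzx⟩ = C := by
  rcases hz with ⟨w, hw, hwz⟩ | hz
  · have : (⟨z, hzx⟩ : ({x}ᶜ : Set V)) = w := Subtype.ext hwz.symm
    rw [this]; exact hw
  · exact absurd hz hzx

private lemma aux14_endpoints_mem {e : Sym2 V} (he : e ∈ G.edgeSet)
    {z : V} (hz : z ∈ e) (hzc : z ∈ ({x}ᶜ : Set V)) :
    ∀ a ∈ e, a ∈ (Subtype.val ''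
      ((G.induce ({x}ᶜ : Set V)).connectedComponentMk ⟨z, hzc⟩).supp ∪ {x} : Set V) := by
  intro a ha
  by_cases hax : a = x
  · exact Or.inr hax
  · refine Or.inl ⟨⟨a, hax⟩, ?_, rfl⟩
    rw [SimpleGraph.ConnectedComponent.mem_supp_iff]
    by_cases haz : a = z
    · congr
    · have hadj : G.Adj a z := aux14_adj_of_mems he ha hz haz
      exact SimpleGraph.ConnectedComponent.sound (SimpleGraph.Adj.reachable (by simpa using hadj))

end Comp

section Core
variable {V : Type*}

/-- Compatibility between a global orientation and a family of block orientations. -/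
def aux14_Compat (G : SimpleGraph V) (x : V) (O : GOrientation G)
    (Ofam : ∀ C : (G.induce ({x}ᶜ : Set V)).ConnectedComponent,
      GOrientation (G.induce ((Subtype.val '' C.supp) ∪ {x} : Set V))) : Prop :=
  ∀ C : (G.induce ({x}ᶜ : Set V)).ConnectedComponent,
    ∀ e' ∈ (G.induce ((Subtype.val '' C.supp) ∪ {x} : Set V)).edgeSet,
    ((Ofam C).src e' : V) = O.src (Sym2.map Subtype.val e')

/-- Out-degree of a non-cut vertex agrees between the big graph and its block. -/
lemma aux14_outdeg_ne (G : SimpleGraph V) (x : V) (O : GOrientation G)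
    (Ofam : ∀ C : (G.induce ({x}ᶜ : Set V)).ConnectedComponent,
      GOrientation (G.induce ((Subtype.val '' C.supp) ∪ {x} : Set V)))
    (hc : aux14_Compat G x O Ofam)
    (C : (G.induce ({x}ᶜ : Set V)).ConnectedComponent)
    (y : ((Subtype.val '' C.supp) ∪ {x} : Set V)) (hy : (y : V) ≠ x) :
    outDeg (Ofam C) y = outDeg O (y : V) := by
  have hC : (G.induce ({x}ᶜ : Set V)).connectedComponentMk ⟨(y : V), hy⟩ = C :=
    aux14_comp_eq_of_mem hy y.prop
  have himg : {e ∈ G.edgeSet | O.src e = (y : V)} =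
      Sym2.map Subtype.val ''
        {e' ∈ (G.induce ((Subtype.val '' C.supp) ∪ {x} : Set V)).edgeSet |
          (Ofam C).src e' = y} := by
    ext e
    constructor
    · rintro ⟨he, hsrc⟩
      have hyme : (y : V) ∈ e := hsrc ▸ O.mem e he
      have hall : ∀ a ∈ e, a ∈ ((Subtype.val '' C.supp) ∪ {x} : Set V) := by
        have := aux14_endpoints_mem (x := x) he hyme hy
        rwa [hC] at this
      obtain ⟨e', he'⟩ := aux14_exists_lift _ e hall
      have hedge : e' ∈ (G.induce ((Subtype.val '' C.supp) ∪ {x} : Set V)).edgeSet := by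
        rw [aux14_induce_edge_iff, he']; exact he
      refine ⟨e', ⟨hedge, ?_⟩, he'⟩
      have := hc C e' hedge
      rw [he', hsrc] at this
      exact Subtype.ext this
    · rintro ⟨e', ⟨hedge, hsrc'⟩, rfl⟩
      have he : Sym2.map Subtype.val e' ∈ G.edgeSet :=
        (aux14_induce_edge_iff _ _ _).1 hedge
      refine ⟨he, ?_⟩
      rw [← hc C e' hedge, hsrc']
  rw [outDeg, outDeg, himg, Set.ncard_image_of_injective _ aux14_sym2_inj]

end Core

section Core2
variable {V : Type*}

open scoped Classical in
/-- Out-degree of the cut vertex is the sum of its block out-degrees. -/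
lemma aux14_outdeg_x [Fintype V] (G : SimpleGraph V) (x : V)
    (hne : Nonempty (({x}ᶜ : Set V)))
    (O : GOrientation G)
    (Ofam : ∀ C : (G.induce ({x}ᶜ : Set V)).ConnectedComponent,
      GOrientation (G.induce ((Subtype.val '' C.supp) ∪ {x} : Set V)))
    (hc : aux14_Compat G x O Ofam) :
    outDeg O x = ∑ C, outDeg (Ofam C) ⟨x, Or.inr rfl⟩ := by
  classical
  set g : Sym2 V → (G.induce ({x}ᶜ : Set V)).ConnectedComponent := fun e =>
    if h : ∃ z : (({x}ᶜ : Set V)), (z : V) ∈ e then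
      (G.induce ({x}ᶜ : Set V)).connectedComponentMk h.choose
    else (G.induce ({x}ᶜ : Set V)).connectedComponentMk hne.some with hg
  rw [outDeg, aux14_ncard_fiberwise _ g]
  refine Finset.sum_congr rfl fun C _ => ?_
  have himg : {e ∈ {e ∈ G.edgeSet | O.src e = x} | g e = C} =
      Sym2.map Subtype.val ''
        {e' ∈ (G.induce ((Subtype.val '' C.supp) ∪ {x} : Set V)).edgeSet |
          (Ofam C).src e' = ⟨x, Or.inr rfl⟩} := by
    ext e
    constructor
    · rintro ⟨⟨he, hsrc⟩, hgc⟩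
      have hcond : ∃ z : (({x}ᶜ : Set V)), (z : V) ∈ e := by
        obtain ⟨z, hz, hzx⟩ := aux14_exists_ne_mem (G.not_isDiag_of_mem_edgeSet he) x
        exact ⟨⟨z, hzx⟩, hz⟩
      rw [hg] at hgc
      simp only [dif_pos hcond] at hgc
      have hall : ∀ a ∈ e, a ∈ ((Subtype.val '' C.supp) ∪ {x} : Set V) := by
        have := aux14_endpoints_mem (x := x) he hcond.choose_spec hcond.choose.prop
        rwa [hgc] at this
      obtain ⟨e', he'⟩ := aux14_exists_lift _ e hall
      have hedge : e' ∈ (G.induce ((Subtype.val '' C.supp) ∪ {x} : Set V)).edgeSet := by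
        rw [aux14_induce_edge_iff, he']; exact he
      refine ⟨e', ⟨hedge, ?_⟩, he'⟩
      have := hc C e' hedge
      rw [he', hsrc] at this
      exact Subtype.ext this
    · rintro ⟨e', ⟨hedge, hsrc'⟩, rfl⟩
      have he : Sym2.map Subtype.val e' ∈ G.edgeSet :=
        (aux14_induce_edge_iff _ _ _).1 hedge
      have hOsrc : O.src (Sym2.map Subtype.val e') = x := by
        rw [← hc C e' hedge, hsrc']
      refine ⟨⟨he, hOsrc⟩, ?_⟩
      have hcond : ∃ z : (({x}ᶜ : Set V)), (z : V) ∈ Sym2.map Subtype.val e' := by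
        obtain ⟨z, hz, hzx⟩ := aux14_exists_ne_mem (G.not_isDiag_of_mem_edgeSet he) x
        exact ⟨⟨z, hzx⟩, hz⟩
      rw [hg]
      simp only [dif_pos hcond]
      have hmem : (hcond.choose : V) ∈ ((Subtype.val '' C.supp) ∪ {x} : Set V) := by
        obtain ⟨w, hw, hwv⟩ := Sym2.mem_map.1 hcond.choose_spec
        exact hwv ▸ w.prop
      exact aux14_comp_eq_of_mem hcond.choose.prop hmem
  rw [himg, Set.ncard_image_of_injective _ aux14_sym2_inj]
  rfl

open scoped Classical in
/-- Restriction of a global orientation to a block. -/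
noncomputable def aux14_restrictO (G : SimpleGraph V) (S : Set V) (x : V) (hxS : x ∈ S)
    (O : GOrientation G) : GOrientation (G.induce S) where
  src e' := if h : ∃ v ∈ e', (v : V) = O.src (Sym2.map Subtype.val e') then h.choose
    else ⟨x, hxS⟩
  mem e' he' := by
    have hmap : Sym2.map Subtype.val e' ∈ G.edgeSet := (aux14_induce_edge_iff _ _ _).1 he'
    have hsrc := O.mem _ hmap
    have h : ∃ v ∈ e', (v : V) = O.src (Sym2.map Subtype.val e') := Sym2.mem_map.1 hsrc
    rw [dif_pos h]
    exact h.choose_spec.1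

open scoped Classical in
lemma aux14_restrict_compat (G : SimpleGraph V) (x : V) (O : GOrientation G) :
    aux14_Compat G x O (fun C => aux14_restrictO G _ x (Or.inr rfl) O) := by
  intro C e' hedge
  have hmap : Sym2.map Subtype.val e' ∈ G.edgeSet := (aux14_induce_edge_iff _ _ _).1 hedge
  have h : ∃ v ∈ e', (v : V) = O.src (Sym2.map Subtype.val e') :=
    Sym2.mem_map.1 (O.mem _ hmap)
  show ((if h' : ∃ v ∈ e', (v : V) = O.src (Sym2.map Subtype.val e') then h'.choose
      else ⟨x, Or.inr rfl⟩ : _) : V) = _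
  rw [dif_pos h]
  exact h.choose_spec.2

end Core2

section Glue
variable {V : Type*}

private lemma aux14_mem_of_lift {S : Set V} (e : Sym2 V) (e' : Sym2 S)
    (h : Sym2.map Subtype.val e' = e) (v : S) (hv : v ∈ e') : (v : V) ∈ e := by
  subst h
  exact Sym2.mem_map.2 ⟨v, hv, rfl⟩

open scoped Classical in
/-- Gluing block orientations into a global orientation. -/
noncomputable def aux14_glueO (G : SimpleGraph V) (x : V)
    (Ofam : ∀ C : (G.induce ({x}ᶜ : Set V)).ConnectedComponent,
      GOrientation (G.induce ((Subtype.val '' C.supp) ∪ {x} : Set V))) :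
    GOrientation G where
  src e := if h : e ∈ G.edgeSet ∧ ∃ z : (({x}ᶜ : Set V)), (z : V) ∈ e then
      ((Ofam ((G.induce ({x}ᶜ : Set V)).connectedComponentMk h.2.choose)).src
        ((aux14_exists_lift _ e
          (aux14_endpoints_mem h.1 h.2.choose_spec h.2.choose.prop)).choose) : V)
    else x
  mem e he := by
    have hcond : e ∈ G.edgeSet ∧ ∃ z : (({x}ᶜ : Set V)), (z : V) ∈ e := by
      refine ⟨he, ?_⟩
      obtain ⟨z, hz, hzx⟩ := aux14_exists_ne_mem (G.not_isDiag_of_mem_edgeSet he) x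
      exact ⟨⟨z, hzx⟩, hz⟩
    rw [dif_pos hcond]
    have hspec := (aux14_exists_lift _ e
      (aux14_endpoints_mem hcond.1 hcond.2.choose_spec hcond.2.choose.prop)).choose_spec
    have hedge : (aux14_exists_lift _ e
        (aux14_endpoints_mem hcond.1 hcond.2.choose_spec hcond.2.choose.prop)).choose ∈
        (G.induce ((Subtype.val ''
          ((G.induce ({x}ᶜ : Set V)).connectedComponentMk hcond.2.choose).supp) ∪ {x} :
            Set V)).edgeSet := by
      rw [aux14_induce_edge_iff, hspec]; exact he
    exact aux14_mem_of_lift e _ hspec _ ((Ofam _).mem _ hedge)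

private lemma aux14_src_congr (G : SimpleGraph V) (x : V)
    (Ofam : ∀ C : (G.induce ({x}ᶜ : Set V)).ConnectedComponent,
      GOrientation (G.induce ((Subtype.val '' C.supp) ∪ {x} : Set V)))
    {C D : (G.induce ({x}ᶜ : Set V)).ConnectedComponent} (h : C = D)
    (eC : Sym2 ((Subtype.val '' C.supp) ∪ {x} : Set V))
    (eD : Sym2 ((Subtype.val '' D.supp) ∪ {x} : Set V))
    (hmap : Sym2.map Subtype.val eC = Sym2.map Subtype.val eD) :
    ((Ofam C).src eC : V) = ((Ofam D).src eD : V) := by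
  subst h
  exact congrArg _ (congrArg _ (aux14_sym2_inj hmap))

open scoped Classical in
lemma aux14_glue_compat (G : SimpleGraph V) (x : V)
    (Ofam : ∀ C : (G.induce ({x}ᶜ : Set V)).ConnectedComponent,
      GOrientation (G.induce ((Subtype.val '' C.supp) ∪ {x} : Set V))) :
    aux14_Compat G x (aux14_glueO G x Ofam) Ofam := by
  intro C e' hedge
  have he : Sym2.map Subtype.val e' ∈ G.edgeSet := (aux14_induce_edge_iff _ _ _).1 hedge
  have hcond : Sym2.map Subtype.val e' ∈ G.edgeSet ∧
      ∃ z : (({x}ᶜ : Set V)), (z : V) ∈ Sym2.map Subtype.val e' := by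
    refine ⟨he, ?_⟩
    obtain ⟨z, hz, hzx⟩ := aux14_exists_ne_mem (G.not_isDiag_of_mem_edgeSet he) x
    exact ⟨⟨z, hzx⟩, hz⟩
  show _ = (aux14_glueO G x Ofam).src (Sym2.map Subtype.val e')
  rw [aux14_glueO]
  dsimp only
  rw [dif_pos hcond]
  have hCeq : (G.induce ({x}ᶜ : Set V)).connectedComponentMk hcond.2.choose = C := by
    have hmem : (hcond.2.choose : V) ∈ ((Subtype.val '' C.supp) ∪ {x} : Set V) := by
      obtain ⟨w, hw, hwv⟩ := Sym2.mem_map.1 hcond.2.choose_spec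
      exact hwv ▸ w.prop
    exact aux14_comp_eq_of_mem hcond.2.choose.prop hmem
  exact aux14_src_congr G x Ofam hCeq.symm e' _
    (aux14_exists_lift _ (Sym2.map Subtype.val e')
      (aux14_endpoints_mem hcond.1 hcond.2.choose_spec hcond.2.choose.prop)).choose_spec.symm
end Glue

open scoped Classical in
theorem stmt14 {V : Type*} [Fintype V] (G : SimpleGraph V) (H : V → Set ℕ)
    (hd : DensePair G H) (x : V) (hx : IsCutVertex G x) :
    Dset G H x =
      {n | ∃ f : (G.induce ({x}ᶜ : Set V)).ConnectedComponent → ℕ,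
        (∀ C, f C ∈ Dset (G.induce ((Subtype.val '' C.supp) ∪ {x} : Set V))
            (fun w => H w.val) ⟨x, by simp⟩) ∧ n = ∑ C, f C} := by
  ext n
  simp only [Dset, Set.mem_setOf_eq]
  rcases isEmpty_or_nonempty (({x}ᶜ : Set V)) with hemp | hne
  · -- degenerate case: every vertex equals x
    have hvx : ∀ v : V, v = x := fun v => by
      by_contra hv
      exact hemp.false ⟨v, hv⟩
    have hnoedge : G.edgeSet = ∅ := by
      ext e
      simp only [Set.mem_empty_iff_false, iff_false]
      intro he
      obtain ⟨z, hz, hzx⟩ := aux14_exists_ne_mem (G.not_isDiag_of_mem_edgeSet he) x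
      exact hzx (hvx z)
    haveI hCC : IsEmpty (G.induce ({x}ᶜ : Set V)).ConnectedComponent :=
      ⟨fun C => C.ind fun v => hemp.false v⟩
    have hdeg0 : ∀ O : GOrientation G, outDeg O x = 0 := fun O => by
      rw [outDeg]
      convert Set.ncard_empty (Sym2 V)
      rw [Set.eq_empty_iff_forall_notMem]
      rintro e ⟨he, -⟩
      rw [hnoedge] at he
      exact he
    constructor
    · rintro ⟨O, hO, rfl⟩
      refine ⟨fun C => isEmptyElim C, fun C => isEmptyElim C, ?_⟩
      rw [hdeg0 O, Finset.univ_eq_empty, Finset.sum_empty]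
    · rintro ⟨f, hf, rfl⟩
      refine ⟨⟨fun _ => x, fun e he => by rw [hnoedge] at he; exact absurd he (Set.notMem_empty e)⟩,
        fun y hy => absurd (hvx y) hy, ?_⟩
      rw [hdeg0, Finset.univ_eq_empty, Finset.sum_empty]
  · constructor
    · rintro ⟨O, hO, rfl⟩
      set Ofam : ∀ C : (G.induce ({x}ᶜ : Set V)).ConnectedComponent,
          GOrientation (G.induce ((Subtype.val '' C.supp) ∪ {x} : Set V)) :=
        fun C => aux14_restrictO G ((Subtype.val '' C.supp) ∪ {x}) x (Or.inr rfl) O with hOfam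
      refine ⟨fun C => outDeg (Ofam C) ⟨x, Or.inr rfl⟩, fun C => ?_, ?_⟩
      · refine ⟨Ofam C, fun w hw => ?_, rfl⟩
        have hwx : (w : V) ≠ x := fun h => hw (Subtype.ext h)
        rw [aux14_outdeg_ne G x O Ofam (aux14_restrict_compat G x O) C w hwx]
        exact hO w.val hwx
      · exact aux14_outdeg_x G x hne O Ofam (aux14_restrict_compat G x O)
    · rintro ⟨f, hf, rfl⟩
      choose Ofam hOfam hOx using hf
      refine ⟨aux14_glueO G x Ofam, fun y hy => ?_, ?_⟩
      · have hyc : y ∈ ({x}ᶜ : Set V) := hy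
        have hymem : y ∈ ((Subtype.val ''
            ((G.induce ({x}ᶜ : Set V)).connectedComponentMk ⟨y, hyc⟩).supp) ∪ {x} : Set V) :=
          Or.inl ⟨⟨y, hyc⟩, rfl, rfl⟩
        have hkey := aux14_outdeg_ne G x (aux14_glueO G x Ofam) Ofam
          (aux14_glue_compat G x Ofam) ((G.induce ({x}ᶜ : Set V)).connectedComponentMk ⟨y, hyc⟩)
          ⟨y, hymem⟩ hy
        rw [← hkey]
        exact hOfam _ ⟨y, hymem⟩ (fun h => hy (congrArg Subtype.val h))
      · rw [aux14_outdeg_x G x hne (aux14_glueO G x Ofam) Ofam (aux14_glue_compat G x Ofam)]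
        exact Finset.sum_congr rfl fun C _ => hOx C
end

section
/- Let G be a connected graph and U a nonempty finite set of cut vertices of G. Then there exists x ∈ U such that all connected components of G − x, except possibly one, contain no vertex of U \ {x}. -/
lemma mem_c {V : Type*} {a b : V} (h : a ≠ b) : a ∈ ({b}ᶜ : Set V) :=
  Set.mem_compl_singleton_iff.mpr h

lemma key {V : Type*} (G : SimpleGraph V) {y : V} :
    ∀ {z c : V} (_w : G.Walk z c) (hzx : z ≠ c) (hzy : z ≠ y) (hyx : y ≠ c) (hxy : c ≠ y),
      (G.induce ({c}ᶜ : Set V)).connectedComponentMk ⟨z, mem_c hzx⟩ ≠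
        (G.induce ({c}ᶜ : Set V)).connectedComponentMk ⟨y, mem_c hyx⟩ →
      (G.induce ({y}ᶜ : Set V)).Reachable ⟨z, mem_c hzy⟩ ⟨c, mem_c hxy⟩ := by
  intro z c w
  induction w with
  | nil =>
    intro hzx
    exact absurd rfl hzx
  | @cons z b c h w ih =>
    intro hzx hzy hyx hxy hne
    by_cases hb : b = c
    · subst hb
      exact SimpleGraph.Adj.reachable
        (show (G.induce ({y}ᶜ : Set V)).Adj ⟨z, mem_c hzy⟩ ⟨b, mem_c hxy⟩ from h)
    · have hadj : (G.induce ({c}ᶜ : Set V)).Adj ⟨z, mem_c hzx⟩ ⟨b, mem_c hb⟩ := h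
      have hcomp : (G.induce ({c}ᶜ : Set V)).connectedComponentMk ⟨b, mem_c hb⟩ =
          (G.induce ({c}ᶜ : Set V)).connectedComponentMk ⟨z, mem_c hzx⟩ :=
        SimpleGraph.ConnectedComponent.sound hadj.symm.reachable
      have hne' : (G.induce ({c}ᶜ : Set V)).connectedComponentMk ⟨b, mem_c hb⟩ ≠
          (G.induce ({c}ᶜ : Set V)).connectedComponentMk ⟨y, mem_c hyx⟩ :=
        hcomp ▸ hne
      have hby : b ≠ y := by
        rintro rfl
        exact hne' rfl
      have hadj' : (G.induce ({y}ᶜ : Set V)).Adj ⟨z, mem_c hzy⟩ ⟨b, mem_c hby⟩ := h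
      exact hadj'.reachable.trans (ih hb hby hyx hxy hne')

theorem stmt17 {V : Type*} [Fintype V] (G : SimpleGraph V)
    (hG : G.Connected) (U : Set V) (hU : U.Nonempty)
    (hcut : ∀ x ∈ U, IsCutVertex G x) :
    ∃ x ∈ U, ∀ C C' : (G.induce ({x}ᶜ : Set V)).ConnectedComponent,
      (∃ y ∈ C.supp, (y : V) ∈ U \ {x}) → (∃ y ∈ C'.supp, (y : V) ∈ U \ {x}) →
      C = C' := by
  by_contra hcon
  push_neg at hcon
  set S : Set ℕ := {n | ∃ x, x ∈ U ∧ ∃ C : (G.induce ({x}ᶜ : Set V)).ConnectedComponent,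
      (∃ y ∈ C.supp, (y : V) ∈ U \ {x}) ∧ C.supp.ncard = n} with hSdef
  have hSne : S.Nonempty := by
    obtain ⟨x0, hx0⟩ := hU
    obtain ⟨C, C', h1, h2, hne⟩ := hcon x0 hx0
    exact ⟨C.supp.ncard, x0, hx0, C, h1, rfl⟩
  obtain ⟨x, hxU, C, ⟨y, hyC, hyU, hyx⟩, hCn⟩ := Nat.sInf_mem hSne
  -- hyx : (y:V) ∉ {x}
  have hyx' : (y : V) ≠ x := hyx
  obtain ⟨D, D', hD, hD', hDD'⟩ := hcon (y : V) hyU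
  have hxy : x ≠ (y : V) := hyx'.symm
  set E := (G.induce ({(y : V)}ᶜ : Set V)).connectedComponentMk ⟨x, mem_c hxy⟩ with hE
  obtain ⟨D₀, hD₀U, hD₀E⟩ :
      ∃ D₀ : (G.induce ({(y : V)}ᶜ : Set V)).ConnectedComponent,
        (∃ u ∈ D₀.supp, (u : V) ∈ U \ {(y : V)}) ∧ D₀ ≠ E := by
    by_cases hDE : D = E
    · exact ⟨D', hD', fun h => hDD' (hDE.trans h.symm)⟩
    · exact ⟨D, hD, hDE⟩
  -- every vertex of D₀ lies in C (as a vertex of V)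
  have hsub : ∀ z ∈ D₀.supp, (z : V) ∈ Subtype.val '' C.supp := by
    rintro ⟨z, hzmem⟩ hz
    have hzy : z ≠ (y : V) := hzmem
    have hzx : z ≠ x := by
      rintro rfl
      rw [SimpleGraph.ConnectedComponent.mem_supp_iff] at hz
      exact hD₀E (hz ▸ rfl)
    by_contra hnot
    have hzC : (G.induce ({x}ᶜ : Set V)).connectedComponentMk ⟨z, mem_c hzx⟩ ≠ C := by
      intro h
      exact hnot ⟨⟨z, mem_c hzx⟩, by rw [SimpleGraph.ConnectedComponent.mem_supp_iff]; exact h, rfl⟩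
    have hCeq : (G.induce ({x}ᶜ : Set V)).connectedComponentMk y = C :=
      (SimpleGraph.ConnectedComponent.mem_supp_iff _ _).mp hyC
    have hyV : ((y : V) : V) ≠ x := hyx'
    have hne2 : (G.induce ({x}ᶜ : Set V)).connectedComponentMk ⟨z, mem_c hzx⟩ ≠
        (G.induce ({x}ᶜ : Set V)).connectedComponentMk ⟨(y : V), mem_c hyV⟩ := by
      rw [← hCeq] at hzC
      convert hzC using 3
    obtain ⟨w⟩ := hG.preconnected z x
    have hreach := key G w hzx hzy hyx' hxy hne2
    have : D₀ = E := by
      rw [SimpleGraph.ConnectedComponent.mem_supp_iff] at hz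
      rw [← hz, hE]
      exact SimpleGraph.ConnectedComponent.sound hreach
    exact hD₀E this
  -- strict inclusion of images in V
  have hfin : (Subtype.val '' C.supp).Finite := Set.toFinite _
  have hss : Subtype.val '' D₀.supp ⊂ Subtype.val '' C.supp := by
    constructor
    · rintro v ⟨z, hz, rfl⟩
      exact hsub z hz
    · intro hrev
      have hyIn : (y : V) ∈ Subtype.val '' C.supp := ⟨y, hyC, rfl⟩
      obtain ⟨z, hz, hzeq⟩ := hrev hyIn
      exact z.prop (by simp [hzeq])
  have hlt : D₀.supp.ncard < C.supp.ncard := by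
    have := Set.ncard_lt_ncard hss hfin
    rwa [Set.ncard_image_of_injective _ Subtype.val_injective,
      Set.ncard_image_of_injective _ Subtype.val_injective] at this
  have hmem : D₀.supp.ncard ∈ S := ⟨(y : V), hyU, D₀, hD₀U, rfl⟩
  have := Nat.sInf_le hmem
  omega
end
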